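/- arXiv:cond-mat/0511604 — 7 statements merged into one kernel-verified Lean document; each statement's English description precedes it below -/
import Mathlib

section
/- Let M₁, M₂ ≥ 1 be integers, let z_1, …, z_{M₁} ∈ ℂ be pairwise distinct and let w_1, …, w_{M₂} ∈ ℂ be pairwise distinct. Then Σ_{i=1}^{M₁} Σ_{k=1}^{M₂} Σ_{m=1}^{M₁−1} Σ_{n=1}^{M₂−1} (−1)^n Σ_{A} Σ_{B} z_i w_k (z_i − w_k)^{m+n−2} / (∏_{a∈A}(z_a − z_i) · ∏_{b∈B}(w_b − w_k)) = −Σ_{m=1}^{min(M₁,M₂)} (M₁ − m)(M₂ − m), where the inner sums range over all subsets A ⊆ {1,…,M₁}\{i} with |A| = m and all subsets B ⊆ {1,…,M₂}\{k} with |B| = n. -/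
/-!
Expanding `(z i - w k) ^ (m + n - 2)` binomially turns the left side into a combination of
products of one-variable sums `∑ i, ∑ |A| = m, z i ^ p / ∏ a ∈ A, (z a - z i)`. Grouping the
pairs `(i, A)` by `C = insert i A`, the sum over `i ∈ C` is, up to the sign `(-1) ^ m`, the
leading coefficient of the Lagrange interpolant of `X ^ p` on the nodes `z '' C`; so for `p ≤ m`
it is `(-1) ^ m` if `p = m` and `0` otherwise, and a single binomial term survives. This leaves
the integer identity `binomSum 2 2 P Q = ∑ m ∈ Icc 1 (min P Q), (P - m) * (Q - m)`.
Vandermonde's identity and binomial inversion give `binomSum 0 0 P Q = [P = Q]`, and Pascal's rule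
shows that raising `i` (or `j`) by one takes partial sums in `P` (or `Q`); summing twice in each
variable gives the right side.
-/

open Finset

section PartialFractions

variable {F ι κ : Type*} [Field F] [DecidableEq ι] [DecidableEq κ]

open Polynomial in
theorem sum_pow_div_prod_sub {s : Finset ι} {v : ι → F} (hvs : Set.InjOn v s) {p : ℕ}
    (hp : p < #s) :
    ∑ i ∈ s, v i ^ p / ∏ j ∈ s.erase i, (v i - v j) = if p + 1 = #s then 1 else 0 := by
  have hdeg : (X ^ p : F[X]).degree < #s := by rw [degree_X_pow]; exact_mod_cast hp
  have h := Lagrange.coeff_eq_sum hvs hdeg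
  simp only [coeff_X_pow, eval_pow, eval_X] at h
  rw [← h]
  exact if_congr (by omega) rfl rfl

theorem sum_pow_div_prod_sub_swap {C : Finset ι} {z : ι → F} (hz : Set.InjOn z C) {m p : ℕ}
    (hC : #C = m + 1) (hp : p ≤ m) :
    ∑ i ∈ C, z i ^ p / ∏ a ∈ C.erase i, (z a - z i) = if p = m then (-1) ^ m else 0 := by
  have hsign : ∀ i ∈ C, z i ^ p / ∏ a ∈ C.erase i, (z a - z i) =
      (-1) ^ m * (z i ^ p / ∏ a ∈ C.erase i, (z i - z a)) := fun i hi => by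
    simp_rw [← neg_sub (z i), prod_neg, card_erase_of_mem hi, hC, add_tsub_cancel_right]
    rw [mul_comm, ← div_div, div_eq_mul_inv _ ((-1) ^ m), ← inv_pow, inv_neg_one, mul_comm]
  rw [sum_congr rfl hsign, ← mul_sum, sum_pow_div_prod_sub hz (by omega), hC]
  simp

theorem sum_sum_powersetCard_erase {α M : Type*} [DecidableEq α] [AddCommMonoid M]
    (s : Finset α) (m : ℕ) (f : α → Finset α → M) :
    ∑ i ∈ s, ∑ A ∈ (s.erase i).powersetCard m, f i A =
      ∑ C ∈ s.powersetCard (m + 1), ∑ i ∈ C, f i (C.erase i) := by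
  rw [sum_sigma', sum_sigma']
  refine sum_nbij' (fun x => ⟨insert x.1 x.2, x.1⟩) (fun y => ⟨y.2, y.1.erase y.2⟩)
    ?_ ?_ ?_ ?_ ?_
  all_goals
    rintro ⟨i, A⟩ h
    simp only [mem_sigma, mem_powersetCard] at h
    grind [insert_subset_iff, subset_erase, erase_subset_erase, erase_insert, insert_erase]

theorem sum_sum_powersetCard_pow_div_prod_sub {s : Finset ι} {z : ι → F} (hz : Set.InjOn z s)
    {m p : ℕ} (hp : p ≤ m) :
    ∑ i ∈ s, ∑ A ∈ (s.erase i).powersetCard m, z i ^ p / ∏ a ∈ A, (z a - z i) =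
      if p = m then (-1 : F) ^ m * (#s).choose (m + 1) else 0 := by
  rw [sum_sum_powersetCard_erase, sum_congr rfl fun C hC =>
      sum_pow_div_prod_sub_swap (hz.mono (mem_powersetCard.mp hC).1) (mem_powersetCard.mp hC).2 hp,
    sum_const, card_powersetCard]
  split_ifs <;> simp [mul_comm]

theorem sum_sum_mul_sub_pow_div_prod_mul_prod_eq_sum_range (s : Finset ι) (t : Finset κ)
    (z : ι → F) (w : κ → F) (m n q : ℕ) :
    ∑ i ∈ s, ∑ A ∈ (s.erase i).powersetCard m,
      ∑ k ∈ t, ∑ B ∈ (t.erase k).powersetCard n,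
        z i * w k * (z i - w k) ^ q / ((∏ a ∈ A, (z a - z i)) * ∏ b ∈ B, (w b - w k)) =
    ∑ j ∈ range (q + 1), (-1 : F) ^ (j + q) * q.choose j *
      ((∑ i ∈ s, ∑ A ∈ (s.erase i).powersetCard m,
          z i ^ (j + 1) / ∏ a ∈ A, (z a - z i)) *
        ∑ k ∈ t, ∑ B ∈ (t.erase k).powersetCard n,
          w k ^ (q - j + 1) / ∏ b ∈ B, (w b - w k)) := by
  simp_rw [sub_pow, sum_mul, mul_sum, sum_div]
  simp only [sum_comm (t := range (q + 1))]
  refine sum_congr rfl fun j _ => sum_congr rfl fun i _ => sum_congr rfl fun A _ =>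
    sum_congr rfl fun k _ => sum_congr rfl fun B _ => ?_
  ring

theorem sum_sum_mul_sub_pow_div_prod_mul_prod {s : Finset ι} {t : Finset κ} {z : ι → F}
    {w : κ → F} (hz : Set.InjOn z s) (hw : Set.InjOn w t) (a b : ℕ) :
    ∑ i ∈ s, ∑ A ∈ (s.erase i).powersetCard (a + 1),
      ∑ k ∈ t, ∑ B ∈ (t.erase k).powersetCard (b + 1),
        z i * w k * (z i - w k) ^ (a + b) /
          ((∏ x ∈ A, (z x - z i)) * ∏ y ∈ B, (w y - w k)) =
    (-1) ^ a * (a + b).choose a * (#s).choose (a + 2) * (#t).choose (b + 2) := by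
  rw [sum_sum_mul_sub_pow_div_prod_mul_prod_eq_sum_range, sum_eq_single_of_mem a (by simp)]
  · rw [sum_sum_powersetCard_pow_div_prod_sub hz le_rfl, if_pos rfl,
      show a + b - a + 1 = b + 1 by omega, sum_sum_powersetCard_pow_div_prod_sub hw le_rfl,
      if_pos rfl]
    have hsign : (-1 : F) ^ (a + (a + b)) * ((-1) ^ (a + 1) * (-1) ^ (b + 1)) = (-1) ^ a := by
      rw [← pow_add, ← pow_add,
        show a + (a + b) + (a + 1 + (b + 1)) = a + 2 * (a + b + 1) by ring, pow_add, pow_mul,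
        neg_one_sq, one_pow, mul_one]
    linear_combination ((a + b).choose a * (#s).choose (a + 2) * (#t).choose (b + 2) : F) * hsign
  · intro j hj hja
    have hj := mem_range.mp hj
    rcases Nat.lt_or_gt_of_ne hja with h | h
    · rw [sum_sum_powersetCard_pow_div_prod_sub hz (by omega), if_neg (by omega), zero_mul,
        mul_zero]
    · rw [sum_sum_powersetCard_pow_div_prod_sub hw (by omega), if_neg (by omega), mul_zero,
        mul_zero]

end PartialFractions

namespace Nat

theorem choose_add_eq_sum_choose_mul_choose {a N : ℕ} (b : ℕ) (ha : a < N) :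
    (a + b).choose a = ∑ t ∈ range N, a.choose t * b.choose t := by
  rw [add_choose_eq,
    Finset.Nat.sum_antidiagonal_eq_sum_range_succ (fun i j => a.choose i * b.choose j),
    ← sum_range_reflect, ← sum_subset (range_subset_range.mpr ha)]
  · refine sum_congr rfl fun t ht => ?_
    rw [mem_range] at ht
    rw [show a.succ - 1 - t = a - t by omega, Nat.sub_sub_self (by omega), choose_symm (by omega)]
  · intro t _ ht
    rw [choose_eq_zero_of_lt (by simpa using ht), zero_mul]

theorem alternating_sum_choose_mul_choose (n k : ℕ) :
    ∑ a ∈ range (n + 1), (-1 : ℤ) ^ a * n.choose a * a.choose k =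
      if k = n then (-1) ^ n else 0 := by
  have h := fwdDiff_iter_eq_sum_shift (h := 1) (fun x : ℕ => (x.choose k : ℤ)) n 0
  simp only [fwdDiff_iter_choose_zero, zero_add, smul_eq_mul, mul_one] at h
  have hsign : ∀ a ∈ range (n + 1), (-1 : ℤ) ^ a = (-1) ^ n * (-1) ^ (n - a) := fun a ha => by
    rw [← pow_add, show n + (n - a) = a + 2 * (n - a) by grind, pow_add, pow_mul, neg_one_sq,
      one_pow, mul_one]
  rw [sum_congr rfl fun a ha => by rw [hsign a ha, mul_assoc, mul_assoc], ← mul_sum]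
  simp_rw [← mul_assoc, ← h, eq_comm (a := k)]
  split_ifs <;> simp

end Nat

theorem sum_range_sum_range_eq_sum_range_nsmul {M : Type*} [AddCommMonoid M] (f : ℕ → M)
    (n : ℕ) :
    ∑ p ∈ range n, ∑ t ∈ range p, f t = ∑ t ∈ range n, (n - (t + 1)) • f t := by
  induction n with
  | zero => rfl
  | succ n ih =>
    rw [sum_range_succ, ih, sum_range_succ, Nat.sub_self, zero_smul, add_zero, ← sum_add_distrib]
    refine sum_congr rfl fun t ht => ?_
    rw [show n + 1 - (t + 1) = n - (t + 1) + 1 by grind, succ_nsmul]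

theorem sum_Icc_one_eq_sum_range {M : Type*} [AddCommMonoid M] (f : ℕ → M) (n : ℕ) :
    ∑ m ∈ Icc 1 n, f m = ∑ a ∈ range n, f (a + 1) := by
  rw [← Ico_add_one_right_eq_Icc, sum_Ico_eq_sum_range, Nat.add_sub_cancel]
  simp_rw [add_comm 1]

theorem sum_range_eq_sum_range_of_eq_zero {M : Type*} [AddCommMonoid M] {f : ℕ → M}
    {K N N' : ℕ} (hf : ∀ n ≥ K, f n = 0) (hN : K ≤ N) (hN' : K ≤ N') :
    ∑ n ∈ range N, f n = ∑ n ∈ range N', f n :=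
  (eventually_constant_sum hf hN).trans (eventually_constant_sum hf hN').symm

def binomSum (i j P Q : ℕ) : ℤ :=
  ∑ a ∈ range (P + 1), ∑ b ∈ range (Q + 1),
    (-1) ^ (a + b) * (a + b).choose a * P.choose (a + i) * Q.choose (b + j)

theorem sum_range_sum_range_eq_binomSum {i j P Q N M : ℕ} (hN : P + 1 ≤ N + i)
    (hM : Q + 1 ≤ M + j) :
    ∑ a ∈ range N, ∑ b ∈ range M,
      (-1 : ℤ) ^ (a + b) * (a + b).choose a * P.choose (a + i) * Q.choose (b + j) =
      binomSum i j P Q := by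
  have hrow : ∀ a, ∑ b ∈ range M,
      (-1 : ℤ) ^ (a + b) * (a + b).choose a * P.choose (a + i) * Q.choose (b + j) =
      ∑ b ∈ range (Q + 1),
      (-1 : ℤ) ^ (a + b) * (a + b).choose a * P.choose (a + i) * Q.choose (b + j) := fun a =>
    sum_range_eq_sum_range_of_eq_zero (K := Q + 1 - j)
      (fun b hb => by simp [Nat.choose_eq_zero_of_lt (show Q < b + j by omega)])
      (by omega) (by omega)
  simp_rw [hrow]
  exact sum_range_eq_sum_range_of_eq_zero (K := P + 1 - i)
    (fun a ha => by simp [Nat.choose_eq_zero_of_lt (show P < a + i by omega)])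
    (by omega) (by omega)

theorem binomSum_comm (i j P Q : ℕ) : binomSum i j P Q = binomSum j i Q P := by
  rw [binomSum, sum_comm]
  refine sum_congr rfl fun b _ => sum_congr rfl fun a _ => ?_
  rw [add_comm b a, Nat.choose_symm_add]
  ring

theorem binomSum_succ_left_succ (i j P Q : ℕ) :
    binomSum (i + 1) j (P + 1) Q = binomSum (i + 1) j P Q + binomSum i j P Q := by
  rw [← sum_range_sum_range_eq_binomSum (i := i + 1) (j := j) (P := P) (Q := Q) (N := P + 2)
      (M := Q + 1) (by omega) (by omega),
    ← sum_range_sum_range_eq_binomSum (i := i) (j := j) (P := P) (Q := Q) (N := P + 2)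
      (M := Q + 1) (by omega) (by omega),
    ← sum_add_distrib]
  refine sum_congr rfl fun a _ => ?_
  rw [← sum_add_distrib]
  refine sum_congr rfl fun b _ => ?_
  rw [← add_assoc, Nat.choose_succ_succ']
  push_cast
  ring

theorem binomSum_succ_left (i j P Q : ℕ) :
    binomSum (i + 1) j P Q = ∑ p ∈ range P, binomSum i j p Q := by
  induction P with
  | zero =>
    exact sum_eq_zero fun a _ => sum_eq_zero fun b _ => by
      simp [Nat.choose_eq_zero_of_lt (show 0 < a + (i + 1) by omega)]
  | succ P ih => rw [binomSum_succ_left_succ, ih, sum_range_succ]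

theorem binomSum_add_two_left (i j P Q : ℕ) :
    binomSum (i + 2) j P Q = ∑ t ∈ range P, (P - (t + 1)) • binomSum i j t Q := by
  simp_rw [binomSum_succ_left]
  exact sum_range_sum_range_eq_sum_range_nsmul _ P

theorem binomSum_add_two_right (i j P Q : ℕ) :
    binomSum i (j + 2) P Q = ∑ t ∈ range Q, (Q - (t + 1)) • binomSum i j P t := by
  simp_rw [binomSum_comm i, binomSum_add_two_left]

theorem binomSum_zero_zero (P Q : ℕ) : binomSum 0 0 P Q = if P = Q then 1 else 0 := by
  calc binomSum 0 0 P Q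
      = ∑ a ∈ range (P + 1), ∑ b ∈ range (Q + 1), ∑ t ∈ range (P + 1),
          ((-1 : ℤ) ^ a * P.choose a * a.choose t) * ((-1) ^ b * Q.choose b * b.choose t) := by
        refine sum_congr rfl fun a ha => sum_congr rfl fun b _ => ?_
        rw [Nat.choose_add_eq_sum_choose_mul_choose b (mem_range.mp ha), add_zero, add_zero]
        push_cast
        rw [mul_sum, sum_mul, sum_mul]
        exact sum_congr rfl fun t _ => by ring
    _ = ∑ t ∈ range (P + 1),
          (∑ a ∈ range (P + 1), (-1 : ℤ) ^ a * P.choose a * a.choose t) *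
            ∑ b ∈ range (Q + 1), (-1 : ℤ) ^ b * Q.choose b * b.choose t := by
        simp_rw [sum_mul_sum]
        exact (sum_congr rfl fun a _ => sum_comm).trans sum_comm
    _ = if P = Q then 1 else 0 := by
        simp_rw [Nat.alternating_sum_choose_mul_choose, ite_zero_mul, sum_ite_eq', mem_range,
          lt_add_one, if_true]
        split_ifs with h
        · subst h; rw [← pow_add, ← two_mul, pow_mul, neg_one_sq, one_pow]
        · rw [mul_zero]

theorem binomSum_zero_two (P Q : ℕ) : binomSum 0 2 P Q = (Q - (P + 1) : ℕ) := by
  rw [binomSum_add_two_right]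
  simp_rw [binomSum_zero_zero, smul_ite, smul_zero, sum_ite_eq, mem_range, nsmul_one]
  split_ifs with h
  · rfl
  · rw [Nat.sub_eq_zero_of_le (by omega), Nat.cast_zero]

theorem binomSum_two_two (P Q : ℕ) :
    binomSum 2 2 P Q = ∑ m ∈ Icc 1 (min P Q), ((P : ℤ) - m) * ((Q : ℤ) - m) := by
  simp_rw [binomSum_add_two_left, binomSum_zero_two, sum_Icc_one_eq_sum_range]
  rw [sum_range_eq_sum_range_of_eq_zero (K := min P Q) (fun t ht => ?_) (min_le_left P Q) le_rfl]
  · refine sum_congr rfl fun t ht => ?_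
    have ht : t < P ∧ t < Q := by simpa using ht
    rw [nsmul_eq_mul, Nat.cast_sub (by omega), Nat.cast_sub (by omega)]
  · rcases min_le_iff.mp ht with h | h
    · rw [Nat.sub_eq_zero_of_le (show P ≤ t + 1 by omega), zero_smul]
    · rw [Nat.sub_eq_zero_of_le (show Q ≤ t + 1 by omega), Nat.cast_zero, smul_zero]

theorem stmt1_general (M₁ M₂ : ℕ)
    (z : Fin M₁ → ℂ) (hz : Function.Injective z)
    (w : Fin M₂ → ℂ) (hw : Function.Injective w) :
    ∑ i : Fin M₁, ∑ k : Fin M₂, ∑ m ∈ Finset.Icc 1 (M₁ - 1), ∑ n ∈ Finset.Icc 1 (M₂ - 1),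
      (-1 : ℂ) ^ n *
        ∑ A ∈ (univ.erase i).powersetCard m,
          ∑ B ∈ (univ.erase k).powersetCard n,
            z i * w k * (z i - w k) ^ (m + n - 2) /
              ((∏ a ∈ A, (z a - z i)) * ∏ b ∈ B, (w b - w k))
    = -∑ m ∈ Finset.Icc 1 (min M₁ M₂), ((M₁ : ℂ) - m) * ((M₂ : ℂ) - m) := by
  have hclosed : (binomSum 2 2 M₁ M₂ : ℂ) =
      ∑ m ∈ Icc 1 (min M₁ M₂), ((M₁ : ℂ) - m) * ((M₂ : ℂ) - m) := by
    rw [binomSum_two_two]; push_cast; rfl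
  simp_rw [mul_sum]
  simp only [sum_comm (s := (univ : Finset (Fin M₂)))]
  simp only [sum_comm (s := (univ : Finset (Fin M₁))), ← mul_sum]
  rw [← hclosed, ← sum_range_sum_range_eq_binomSum (N := M₁ - 1) (M := M₂ - 1) (by omega)
    (by omega), sum_Icc_one_eq_sum_range]
  simp_rw [sum_Icc_one_eq_sum_range (n := M₂ - 1),
    show ∀ a b, a + 1 + (b + 1) - 2 = a + b from fun a b => by omega,
    sum_sum_mul_sub_pow_div_prod_mul_prod hz.injOn hw.injOn, card_univ, Fintype.card_fin]
  push_cast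
  rw [← sum_neg_distrib]
  refine sum_congr rfl fun a _ => ?_
  rw [← sum_neg_distrib]
  exact sum_congr rfl fun b _ => by ring

theorem stmt1 (M₁ M₂ : ℕ) (hM₁ : 1 ≤ M₁) (hM₂ : 1 ≤ M₂)
    (z : Fin M₁ → ℂ) (hz : Function.Injective z)
    (w : Fin M₂ → ℂ) (hw : Function.Injective w) :
    ∑ i : Fin M₁, ∑ k : Fin M₂, ∑ m ∈ Finset.Icc 1 (M₁ - 1), ∑ n ∈ Finset.Icc 1 (M₂ - 1),
      (-1 : ℂ) ^ n *
        ∑ A ∈ (univ.erase i).powersetCard m,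
          ∑ B ∈ (univ.erase k).powersetCard n,
            z i * w k * (z i - w k) ^ (m + n - 2) /
              ((∏ a ∈ A, (z a - z i)) * ∏ b ∈ B, (w b - w k))
    = -∑ m ∈ Finset.Icc 1 (min M₁ M₂), ((M₁ : ℂ) - m) * ((M₂ : ℂ) - m) :=
  stmt1_general M₁ M₂ z hz w hw
end

section
/- Let N, M₁, M₂ be positive integers with M₁ ≤ M₂ and M₁ < N, let n be an integer with 0 ≤ n ≤ M₁, and let z_1, …, z_{M₁}, w_1, …, w_{M₂} ∈ ℂ be such that the z_i are pairwise distinct, the w_k are pairwise distinct, and z_i ≠ w_k for all i, k. Then Σ_{i=1}^{M₁} Σ_{k=1}^{M₂} (z_i/(z_i − w_k)) · [ w_k ∏_{j≠i} ((z_j − w_k)/(z_j − z_i)) · ∏_{l≠k} ((w_l − z_i)/(w_l − w_k)) − z_i ] · Σ_{γ=1}^{N} η̄_γ^{n} ∏_{j≠i} (η_γ − z_j) = [ −n(n+1)/2 + M₁(M₁+1)/2 ] · Σ_{γ=1}^{N} η̄_γ^{n} ∏_{i=1}^{M₁} (η_γ − z_i). -/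
open Finset

/-- The `N`-th roots of unity: `η_γ = exp(2πiγ/N)` for `γ = 1, …, N`. -/
noncomputable def η (N : ℕ) (γ : Fin N) : ℂ :=
  Complex.exp (2 * Real.pi * Complex.I * ((γ : ℕ) + 1) / N)

/-!
Fix `i`, put `S_i = ∏_{j ≠ i} (X - z_j)` and `T_i = X S_i`, and let `L_k` be the Lagrange basis
at the nodes `w`. The sum over `k` is `z_i / S_i(z_i)` times
`∑_k (T_i(w_k) L_k(z_i) - T_i(z_i)) / (z_i - w_k)`. As `deg T_i ≤ M₂`, interpolating the
polynomial `(W(z_i) T_i - T_i(z_i) W) / (X - z_i)` at the `w_k` (`W` the nodal polynomial of `w`)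
shows that this sum is `-T_i'(z_i)`.

The numbers `-z_i T_i'(z_i)` are the values at the `z_i` of `G = c P - X P' - X² P'' / 2`, where
`P = ∏ (X - z_i)` and `c = M₁(M₁+1)/2`; this `G` has degree `< M₁`, so interpolation at the `z_i`
turns the left-hand side into `∑_γ η̄_γ^n G(η_γ)`. Averaging against `η̄_γ^n` over the `N`-th
roots of unity extracts `N` times the `n`-th coefficient of a polynomial of degree `< N`, and the
`n`-th coefficient of `G` is `c - n(n+1)/2` times that of `P`.
-/

open Polynomial ComplexConjugate

theorem η_eq_pow (N : ℕ) (γ : Fin N) :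
    η N γ = Complex.exp (2 * Real.pi * Complex.I / N) ^ ((γ : ℕ) + 1) := by
  rw [← Complex.exp_nat_mul, η]
  congr 1
  push_cast
  ring

theorem conj_η (N : ℕ) (γ : Fin N) : conj (η N γ) = (η N γ)⁻¹ := by
  rw [η, ← Complex.exp_conj, ← Complex.exp_neg]
  congr 1
  simp [map_div₀, Complex.conj_I, map_ofNat, ← Complex.ofReal_natCast]
  ring

theorem sum_conj_η_pow_mul_η_pow {N m n : ℕ} (hm : m < N) (hn : n < N) :
    ∑ γ : Fin N, conj (η N γ) ^ n * η N γ ^ m = if m = n then (N : ℂ) else 0 := by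
  have hζ := Complex.isPrimitiveRoot_exp N (by omega)
  set ζ := Complex.exp (2 * Real.pi * Complex.I / N)
  have hζ0 : ζ ≠ 0 := Complex.exp_ne_zero _
  set ξ := ζ ^ m / ζ ^ n
  have hterm (γ : Fin N) : conj (η N γ) ^ n * η N γ ^ m = ξ ^ ((γ : ℕ) + 1) := by
    rw [conj_η, η_eq_pow]
    ring
  simp_rw [hterm]
  split_ifs with hmn
  · simp [ξ, hmn, hζ0]
  · have hξ1 : ξ ≠ 1 := fun h =>
      hmn (hζ.pow_inj hm hn ((div_eq_one_iff_eq (pow_ne_zero _ hζ0)).1 h))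
    have hξN : ξ ^ N = 1 := by
      rw [div_pow, ← pow_mul, ← pow_mul, mul_comm m, mul_comm n, pow_mul, pow_mul,
        hζ.pow_eq_one, one_pow, one_pow, div_one]
    simp_rw [Fin.sum_univ_eq_sum_range (fun i => ξ ^ (i + 1)), pow_succ', ← mul_sum,
      geom_sum_eq hξ1, hξN, sub_self, zero_div, mul_zero]

theorem sum_conj_η_pow_mul_eval {N n : ℕ} (hn : n < N) {p : ℂ[X]} (hp : p.natDegree < N) :
    ∑ γ : Fin N, conj (η N γ) ^ n * p.eval (η N γ) = N * p.coeff n := by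
  simp_rw [eval_eq_sum_range' hp, mul_sum, mul_left_comm _ (p.coeff _)]
  rw [sum_comm]
  simp_rw [← mul_sum]
  rw [sum_congr rfl fun m hm => by rw [sum_conj_η_pow_mul_η_pow (mem_range.1 hm) hn]]
  simp [hn, mul_comm]

namespace Lagrange

variable {F ι : Type*} [Field F] [DecidableEq ι] {s : Finset ι} {v : ι → F}

theorem eval_basis (i : ι) (x : F) :
    (Lagrange.basis s v i).eval x = ∏ j ∈ s.erase i, (x - v j) / (v i - v j) := by
  simp [Lagrange.basis, eval_prod, basisDivisor, div_eq_inv_mul]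

theorem eval_derivative_nodal {x : F} (hx : ∀ i ∈ s, x ≠ v i) :
    (derivative (nodal s v)).eval x = (nodal s v).eval x * ∑ i ∈ s, (x - v i)⁻¹ := by
  rw [derivative_nodal, eval_finsetSum, mul_sum]
  refine sum_congr rfl fun i hi => ?_
  rw [nodal_eq_mul_nodal_erase hi, eval_mul, eval_sub, eval_X, eval_C,
    mul_comm (x - v i), mul_assoc, mul_inv_cancel₀ (sub_ne_zero.2 (hx i hi)), mul_one]

theorem eq_sum_C_mul_nodal_erase (hvs : Set.InjOn v s) {f : F[X]} (hf : f.degree < #s) :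
    f = ∑ i ∈ s, C (f.eval (v i) / (nodal (s.erase i) v).eval (v i)) * nodal (s.erase i) v := by
  refine (eq_interpolate hvs hf).trans (sum_congr rfl fun i hi => ?_)
  rw [basis_eq_prod_sub_inv_mul_nodal_div hi, ← nodal_erase_eq_nodal_div hi,
    nodalWeight_eq_eval_nodal_erase_inv, ← mul_assoc, ← C_mul, div_eq_mul_inv]

theorem sum_eval_mul_eval_basis_sub_div (hvs : Set.InjOn v s) {p : F[X]}
    (hp : p.natDegree ≤ #s) {x : F} (hx : ∀ i ∈ s, x ≠ v i) :
    ∑ i ∈ s, (p.eval (v i) * (Lagrange.basis s v i).eval x - p.eval x) / (x - v i)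
      = -(derivative p).eval x := by
  set W := nodal s v
  have hWx : W.eval x ≠ 0 := eval_nodal_not_at_node hx
  set U := C (W.eval x) * p - C (p.eval x) * W
  have hUx : U.IsRoot x := by simp [U, mul_comm]
  set q := U /ₘ (X - C x)
  have hq : (X - C x) * q = U := mul_divByMonic_eq_iff_isRoot.2 hUx
  have hqdeg : q.degree < #s := by
    by_cases hU : U = 0
    · simp [q, hU]
    have hUdeg : U.natDegree ≤ #s :=
      (natDegree_sub_le _ _).trans <| max_le ((natDegree_C_mul_le _ _).trans hp)
        ((natDegree_C_mul_le _ _).trans natDegree_nodal.le)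
    calc q.degree < U.degree := degree_divByMonic_lt U _ hU (by simp)
      _ ≤ U.natDegree := degree_le_natDegree
      _ ≤ #s := by exact_mod_cast hUdeg
  have hq_node (i : ι) (hi : i ∈ s) : q.eval (v i) = W.eval x * p.eval (v i) / (v i - x) := by
    have h := congrArg (eval (v i)) hq
    simp only [U, W, eval_mul, eval_sub, eval_X, eval_C, eval_nodal_at_node hi, mul_zero,
      sub_zero] at h
    rw [← h, mul_div_cancel_left₀ _ (sub_ne_zero.2 (hx i hi).symm)]
  -- `q.eval x` is the derivative of `U` at its root `x`
  have hq_x : q.eval x = W.eval x * (derivative p).eval x - p.eval x * (derivative W).eval x := by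
    have h := congrArg (fun f => (derivative f).eval x) hq
    simpa [U, derivative_mul] using h
  have hinterp : q.eval x = ∑ i ∈ s, q.eval (v i) * (Lagrange.basis s v i).eval x := by
    conv_lhs => rw [eq_interpolate hvs hqdeg]
    simp [interpolate_apply, eval_finsetSum]
  calc ∑ i ∈ s, (p.eval (v i) * (Lagrange.basis s v i).eval x - p.eval x) / (x - v i)
      = ∑ i ∈ s, (-(q.eval (v i) * (Lagrange.basis s v i).eval x / W.eval x)
          - p.eval x * (x - v i)⁻¹) := by
        refine sum_congr rfl fun i hi => ?_
        have hxi : x - v i ≠ 0 := sub_ne_zero.2 (hx i hi)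
        have hix : v i - x ≠ 0 := sub_ne_zero.2 (hx i hi).symm
        rw [hq_node i hi]
        field_simp
        ring
    _ = -(q.eval x / W.eval x) - p.eval x * ∑ i ∈ s, (x - v i)⁻¹ := by
        rw [sum_sub_distrib, sum_neg_distrib, ← sum_div, ← hinterp, mul_sum]
    _ = -(derivative p).eval x := by
        rw [hq_x, eval_derivative_nodal hx]
        field_simp
        ring

end Lagrange

section EulerOp

variable {F : Type*} [Field F]

/-- `c p - θ(θ + 1) p / 2` for the Euler operator `θ = X d/dX`. -/
noncomputable def eulerOp (c : F) (p : F[X]) : F[X] :=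
  C c * p - X * derivative p - C 2⁻¹ * (X ^ 2 * derivative (derivative p))

theorem eval_eulerOp_X_sub_C_mul [CharZero F] (c a : F) (q : F[X]) :
    (eulerOp c ((X - C a) * q)).eval a = -(a * (derivative (X * q)).eval a) := by
  simp [eulerOp, derivative_mul]
  ring

theorem coeff_eulerOp [CharZero F] (c : F) (p : F[X]) (n : ℕ) :
    (eulerOp c p).coeff n = (c - n * (n + 1) / 2) * p.coeff n := by
  rcases n with _ | _ | n <;>
    simp [eulerOp, coeff_derivative, coeff_X_mul, pow_two, mul_assoc] <;> ring

theorem degree_eulerOp_lt [CharZero F] (p : F[X]) :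
    (eulerOp ((p.natDegree : F) * (p.natDegree + 1) / 2) p).degree < p.natDegree := by
  rw [degree_lt_iff_coeff_zero]
  intro m hm
  rw [coeff_eulerOp]
  rcases hm.eq_or_lt with rfl | h
  · simp
  · simp [coeff_eq_zero_of_natDegree_lt h]

end EulerOp

open Lagrange

theorem sum_over_w_eq_eval_eulerOp_div {M₁ M₂ : ℕ} (h12 : M₁ ≤ M₂) {z : Fin M₁ → ℂ}
    (hz : Function.Injective z) {w : Fin M₂ → ℂ} (hw : Function.Injective w)
    (hzw : ∀ i k, z i ≠ w k) (c : ℂ) (i : Fin M₁) :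
    ∑ k : Fin M₂, z i / (z i - w k) *
        (w k * (∏ j ∈ univ.erase i, (z j - w k) / (z j - z i)) *
          (∏ l ∈ univ.erase k, (w l - z i) / (w l - w k)) - z i)
      = (eulerOp c (nodal univ z)).eval (z i) / (nodal (univ.erase i) z).eval (z i) := by
  set S := nodal (univ.erase i) z
  have hS : S.eval (z i) ≠ 0 :=
    eval_nodal_not_at_node fun j hj => hz.ne (ne_of_mem_erase hj).symm
  have hXS : (X * S).natDegree ≤ #(univ : Finset (Fin M₂)) := by
    rw [natDegree_X_mul nodal_ne_zero, natDegree_nodal, card_erase_of_mem (mem_univ i),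
      card_univ, card_univ, Fintype.card_fin, Fintype.card_fin]
    have := i.pos
    omega
  have hterm (k : Fin M₂) :
      z i / (z i - w k) * (w k * (∏ j ∈ univ.erase i, (z j - w k) / (z j - z i)) *
          (∏ l ∈ univ.erase k, (w l - z i) / (w l - w k)) - z i)
        = z i / S.eval (z i) * (((X * S).eval (w k) * (Lagrange.basis univ w k).eval (z i)
            - (X * S).eval (z i)) / (z i - w k)) := by
    have hz_ratio : ∏ j ∈ univ.erase i, (z j - w k) / (z j - z i)
        = S.eval (w k) / S.eval (z i) := by
      rw [eval_nodal, eval_nodal, ← prod_div_distrib]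
      exact prod_congr rfl fun j _ => by rw [← neg_div_neg_eq, neg_sub, neg_sub]
    have hw_ratio : ∏ l ∈ univ.erase k, (w l - z i) / (w l - w k)
        = (Lagrange.basis univ w k).eval (z i) := by
      rw [eval_basis]
      exact prod_congr rfl fun l _ => by rw [← neg_div_neg_eq, neg_sub, neg_sub]
    have hzw' : z i - w k ≠ 0 := sub_ne_zero.2 (hzw i k)
    rw [hz_ratio, hw_ratio, eval_mul, eval_mul, eval_X, eval_X]
    field_simp
  rw [sum_congr rfl fun k _ => hterm k, ← mul_sum,
    sum_eval_mul_eval_basis_sub_div hw.injOn hXS fun k _ => hzw i k,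
    nodal_eq_mul_nodal_erase (mem_univ i), eval_eulerOp_X_sub_C_mul]
  ring

theorem stmt2_general (N M₁ M₂ : ℕ) (h12 : M₁ ≤ M₂) (hMN : M₁ < N) (n : ℕ) (hn : n ≤ M₁)
    (z : Fin M₁ → ℂ) (hz : Function.Injective z)
    (w : Fin M₂ → ℂ) (hw : Function.Injective w)
    (hzw : ∀ i k, z i ≠ w k) :
    (∑ i : Fin M₁, ∑ k : Fin M₂,
      z i / (z i - w k) *
        (w k * (∏ j ∈ univ.erase i, (z j - w k) / (z j - z i)) *
            (∏ l ∈ univ.erase k, (w l - z i) / (w l - w k)) - z i) *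
        ∑ γ : Fin N, (starRingEnd ℂ) (η N γ) ^ n * ∏ j ∈ univ.erase i, (η N γ - z j))
    = (-(n : ℂ) * (n + 1) / 2 + (M₁ : ℂ) * (M₁ + 1) / 2) *
        ∑ γ : Fin N, (starRingEnd ℂ) (η N γ) ^ n * ∏ i : Fin M₁, (η N γ - z i) := by
  set P := nodal univ z
  set G := eulerOp ((M₁ : ℂ) * (M₁ + 1) / 2) P
  have hP : P.natDegree = M₁ := by simp [P]
  have hnN : n < N := hn.trans_lt hMN
  have hG : G.degree < M₁ := by simpa [hP] using degree_eulerOp_lt P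
  have hGN : G.natDegree < N := (natDegree_le_of_degree_le hG.le).trans_lt hMN
  simp only [← sum_mul, sum_over_w_eq_eval_eulerOp_div h12 hz hw hzw ((M₁ : ℂ) * (M₁ + 1) / 2)]
  calc ∑ i : Fin M₁, G.eval (z i) / (nodal (univ.erase i) z).eval (z i) *
          ∑ γ : Fin N, conj (η N γ) ^ n * ∏ j ∈ univ.erase i, (η N γ - z j)
      = ∑ γ : Fin N, conj (η N γ) ^ n * G.eval (η N γ) := by
        have hG' : G.degree < #(univ : Finset (Fin M₁)) := by simpa using hG
        conv_rhs => rw [eq_sum_C_mul_nodal_erase hz.injOn hG']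
        simp_rw [eval_finsetSum, eval_mul, eval_C, eval_nodal, mul_sum]
        rw [sum_comm]
        simp_rw [mul_left_comm]
    _ = N * G.coeff n := sum_conj_η_pow_mul_eval hnN hGN
    _ = _ := by
        rw [coeff_eulerOp, mul_left_comm, ← sum_conj_η_pow_mul_eval hnN (hP ▸ hMN)]
        simp_rw [P, eval_nodal]
        ring

theorem stmt2 (N M₁ M₂ : ℕ) (hN : 0 < N) (hM₁ : 0 < M₁) (hM₂ : 0 < M₂)
    (h12 : M₁ ≤ M₂) (hMN : M₁ < N) (n : ℕ) (hn : n ≤ M₁)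
    (z : Fin M₁ → ℂ) (hz : Function.Injective z)
    (w : Fin M₂ → ℂ) (hw : Function.Injective w)
    (hzw : ∀ i k, z i ≠ w k) :
    (∑ i : Fin M₁, ∑ k : Fin M₂,
      z i / (z i - w k) *
        (w k * (∏ j ∈ univ.erase i, (z j - w k) / (z j - z i)) *
            (∏ l ∈ univ.erase k, (w l - z i) / (w l - w k)) - z i) *
        ∑ γ : Fin N, (starRingEnd ℂ) (η N γ) ^ n * ∏ j ∈ univ.erase i, (η N γ - z j))
    = (-(n : ℂ) * (n + 1) / 2 + (M₁ : ℂ) * (M₁ + 1) / 2) *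
        ∑ γ : Fin N, (starRingEnd ℂ) (η N γ) ^ n * ∏ i : Fin M₁, (η N γ - z i) :=
  stmt2_general N M₁ M₂ h12 hMN n hn z hz w hw hzw
end

section
/- Let M be a positive integer, let m, n be integers with 0 ≤ m, n ≤ M, and let z_1, …, z_M ∈ ℂ. Then e_m(z_1,…,z_M) · e_n(z_1,…,z_M) = Σ_{k=max(0, m+n−M)}^{min(m,n)} C(m+n−2k, m−k) · Σ_{(C,D)} ∏_{i∈C} z_i² · ∏_{j∈D} z_j, where the inner sum ranges over all pairs of disjoint subsets C, D ⊆ {1,…,M} with |C| = k and |D| = m + n − 2k, and C(a,b) denotes the binomial coefficient. -/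
open Finset

/-- The elementary symmetric polynomial of degree `q` in the variables `z i`, `i ∈ s`. -/
noncomputable def esymmOn {M : ℕ} (s : Finset (Fin M)) (z : Fin M → ℂ) (q : ℕ) : ℂ :=
  ∑ S ∈ s.powersetCard q, ∏ i ∈ S, z i

theorem stmt4 (M : ℕ) (hM : 0 < M) (m n : ℕ) (hm : m ≤ M) (hn : n ≤ M) (z : Fin M → ℂ) :
    esymmOn univ z m * esymmOn univ z n
    = ∑ k ∈ Finset.Icc (m + n - M) (min m n),
        (Nat.choose (m + n - 2 * k) (m - k) : ℂ) *
          ∑ C ∈ (univ : Finset (Fin M)).powersetCard k,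
            ∑ D ∈ (univ \ C).powersetCard (m + n - 2 * k),
              (∏ i ∈ C, z i ^ 2) * ∏ j ∈ D, z j := by
  classical
  unfold esymmOn
  rw [Finset.sum_mul_sum]
  have hRHS : ∀ k ∈ Finset.Icc (m + n - M) (min m n),
      (Nat.choose (m + n - 2 * k) (m - k) : ℂ) *
        ∑ C ∈ (univ : Finset (Fin M)).powersetCard k,
          ∑ D ∈ (univ \ C).powersetCard (m + n - 2 * k),
            (∏ i ∈ C, z i ^ 2) * ∏ j ∈ D, z j
      = ∑ C ∈ (univ : Finset (Fin M)).powersetCard k,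
          ∑ D ∈ (univ \ C).powersetCard (m + n - 2 * k),
          ∑ _E ∈ D.powersetCard (m - k),
            (∏ i ∈ C, z i ^ 2) * ∏ j ∈ D, z j := by
    intro k _hk
    rw [Finset.mul_sum]
    refine Finset.sum_congr rfl fun C _hC => ?_
    rw [Finset.mul_sum]
    refine Finset.sum_congr rfl fun D hD => ?_
    rw [Finset.sum_const, nsmul_eq_mul, Finset.card_powersetCard,
      (Finset.mem_powersetCard.mp hD).2]
  rw [Finset.sum_congr rfl hRHS]
  -- collapse to sigma sums
  rw [← Finset.sum_product']
  rw [show (∑ k ∈ Finset.Icc (m + n - M) (min m n),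
        ∑ C ∈ (univ : Finset (Fin M)).powersetCard k,
          ∑ D ∈ (univ \ C).powersetCard (m + n - 2 * k),
          ∑ _E ∈ D.powersetCard (m - k),
            (∏ i ∈ C, z i ^ 2) * ∏ j ∈ D, z j)
      = ∑ t ∈ (Finset.Icc (m + n - M) (min m n)).sigma (fun k =>
          ((univ : Finset (Fin M)).powersetCard k).sigma (fun C =>
            ((univ \ C).powersetCard (m + n - 2 * k)).sigma (fun D =>
              D.powersetCard (m - k)))),
          (∏ i ∈ t.2.1, z i ^ 2) * ∏ j ∈ t.2.2.1, z j from by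
    simp only [Finset.sum_sigma]]
  refine Finset.sum_bij'
    (fun p _ => (⟨(p.1 ∩ p.2).card, p.1 ∩ p.2, (p.1 \ p.2) ∪ (p.2 \ p.1), p.1 \ p.2⟩ :
      Σ _ : ℕ, Σ _ : Finset (Fin M), Σ _ : Finset (Fin M), Finset (Fin M)))
    (fun t _ => (t.2.1 ∪ t.2.2.2, t.2.1 ∪ (t.2.2.1 \ t.2.2.2)))
    ?_ ?_ ?_ ?_ ?_
  · rintro ⟨A, B⟩ hp
    simp only [Finset.mem_product, Finset.mem_powersetCard_univ] at hp
    obtain ⟨hA, hB⟩ := hp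
    have hkm : (A ∩ B).card ≤ m := hA ▸ Finset.card_le_card Finset.inter_subset_left
    have hkn : (A ∩ B).card ≤ n := hB ▸ Finset.card_le_card Finset.inter_subset_right
    have hU : (A ∪ B).card + (A ∩ B).card = m + n := by
      rw [Finset.card_union_add_card_inter, hA, hB]
    have hUM : (A ∪ B).card ≤ M := by
      simpa using Finset.card_le_card (Finset.subset_univ (A ∪ B))
    have hAB : (A \ B).card + (A ∩ B).card = m := by
      rw [Finset.card_sdiff_add_card_inter, hA]
    have hBA : (B \ A).card + (B ∩ A).card = n := by
      rw [Finset.card_sdiff_add_card_inter, hB]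
    rw [Finset.inter_comm] at hBA
    have hdisj : Disjoint (A \ B) (B \ A) := disjoint_sdiff_sdiff
    simp only [Finset.mem_sigma, Finset.mem_Icc, Finset.mem_powersetCard]
    refine ⟨⟨by omega, le_min hkm hkn⟩, ⟨Finset.subset_univ _, trivial⟩, ⟨?_, ?_⟩,
      Finset.subset_union_left, by omega⟩
    · intro x hx
      simp only [Finset.mem_union, Finset.mem_sdiff] at hx
      simp only [Finset.mem_sdiff, Finset.mem_univ, Finset.mem_inter, true_and]
      tauto
    · rw [Finset.card_union_of_disjoint hdisj]; omega
  · rintro ⟨k, C, D, E⟩ ht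
    simp only [Finset.mem_sigma, Finset.mem_Icc, Finset.mem_powersetCard_univ,
      Finset.mem_powersetCard] at ht
    obtain ⟨⟨hk1, hk2⟩, hC, ⟨hDsub, hDcard⟩, hEsub, hEcard⟩ := ht
    have hkm : k ≤ m := le_trans hk2 (min_le_left m n)
    have hkn : k ≤ n := le_trans hk2 (min_le_right m n)
    have hCD : Disjoint C D := by
      refine Finset.disjoint_left.mpr fun x hxC hxD => ?_
      have := hDsub hxD
      simp only [Finset.mem_sdiff] at this
      exact this.2 hxC
    have hCE : Disjoint C E := hCD.mono_right hEsub
    simp only [Finset.mem_product, Finset.mem_powersetCard_univ]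
    constructor
    · rw [Finset.card_union_of_disjoint hCE, hC.2, hEcard]; omega
    · rw [Finset.card_union_of_disjoint (hCD.mono_right (Finset.sdiff_subset)),
        Finset.card_sdiff_of_subset hEsub, hC.2, hDcard, hEcard]
      omega
  · rintro ⟨A, B⟩ _hp
    simp only [Prod.mk.injEq]
    constructor
    · ext x; simp only [Finset.mem_union, Finset.mem_inter, Finset.mem_sdiff]; tauto
    · ext x
      simp only [Finset.mem_union, Finset.mem_inter, Finset.mem_sdiff]
      tauto
  · rintro ⟨k, C, D, E⟩ ht
    simp only [Finset.mem_sigma, Finset.mem_Icc, Finset.mem_powersetCard_univ,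
      Finset.mem_powersetCard] at ht
    obtain ⟨⟨hk1, hk2⟩, hC, ⟨hDsub, hDcard⟩, hEsub, hEcard⟩ := ht
    have hCD : Disjoint C D := by
      refine Finset.disjoint_left.mpr fun x hxC hxD => ?_
      have := hDsub hxD
      simp only [Finset.mem_sdiff] at this
      exact this.2 hxC
    have hInter : (C ∪ E) ∩ (C ∪ D \ E) = C := by
      ext x
      simp only [Finset.mem_inter, Finset.mem_union, Finset.mem_sdiff]
      constructor
      · rintro ⟨h1 | h1, h2 | h2⟩ <;> first | exact h1 | exact h2 | tauto
      · intro h; exact ⟨Or.inl h, Or.inl h⟩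
    have hSd1 : (C ∪ E) \ (C ∪ D \ E) = E := by
      ext x
      simp only [Finset.mem_sdiff, Finset.mem_union, not_or, Finset.mem_sdiff, not_and, not_not]
      constructor
      · rintro ⟨h1 | h1, h2, h3⟩
        · exact absurd h1 h2
        · exact h1
      · intro hx
        have hxD := hEsub hx
        have hxC : x ∉ C := Finset.disjoint_right.mp hCD hxD
        exact ⟨Or.inr hx, hxC, fun h => hx⟩
    have hSd2 : (C ∪ D \ E) \ (C ∪ E) = D \ E := by
      ext x
      simp only [Finset.mem_sdiff, Finset.mem_union, not_or, Finset.mem_sdiff]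
      constructor
      · rintro ⟨h1 | h1, h2, h3⟩
        · exact absurd h1 h2
        · exact h1
      · rintro ⟨hxD, hxE⟩
        have hxC : x ∉ C := Finset.disjoint_right.mp hCD hxD
        exact ⟨Or.inr ⟨hxD, hxE⟩, hxC, hxE⟩
    simp only [hInter, hSd1, hSd2, hC.2, Finset.union_sdiff_of_subset hEsub]
  · rintro ⟨A, B⟩ _hp
    have h1 : A = (A ∩ B) ∪ (A \ B) := by
      ext x; simp only [Finset.mem_union, Finset.mem_inter, Finset.mem_sdiff]; tauto
    have h2 : B = (A ∩ B) ∪ (B \ A) := by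
      ext x; simp only [Finset.mem_union, Finset.mem_inter, Finset.mem_sdiff]; tauto
    have d1 : Disjoint (A ∩ B) (A \ B) := by
      refine Finset.disjoint_left.mpr fun x hx hx' => ?_
      simp only [Finset.mem_inter] at hx
      simp only [Finset.mem_sdiff] at hx'
      exact hx'.2 hx.2
    have d2 : Disjoint (A ∩ B) (B \ A) := by
      refine Finset.disjoint_left.mpr fun x hx hx' => ?_
      simp only [Finset.mem_inter] at hx
      simp only [Finset.mem_sdiff] at hx'
      exact hx'.2 hx.1
    have d3 : Disjoint (A \ B) (B \ A) := disjoint_sdiff_sdiff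
    calc (∏ i ∈ A, z i) * ∏ j ∈ B, z j
        = ((∏ i ∈ A ∩ B, z i) * ∏ i ∈ A \ B, z i) *
          ((∏ i ∈ A ∩ B, z i) * ∏ i ∈ B \ A, z i) := by
          rw [← Finset.prod_union d1, ← Finset.prod_union d2, ← h1, ← h2]
      _ = (∏ i ∈ A ∩ B, z i ^ 2) * ∏ j ∈ (A \ B) ∪ (B \ A), z j := by
          rw [Finset.prod_union d3]
          simp only [sq, Finset.prod_mul_distrib]
          ring
end

section
/- Let M₁ be a positive integer, let m, n be integers with 0 ≤ n ≤ m ≤ M₁, set ℓ_m = min(M₁ − m, n), and let z_1, …, z_{M₁} ∈ ℂ. Then Σ_{i=1}^{M₁} z_i² · e_{M₁−m−1}(z_1,…,ẑ_i,…,z_{M₁}) · e_{M₁−n−1}(z_1,…,ẑ_i,…,z_{M₁}) = (M₁ − m) · e_{M₁−m}(z_1,…,z_{M₁}) · e_{M₁−n}(z_1,…,z_{M₁}) − Σ_{ℓ=1}^{ℓ_m} (m − n + 2ℓ) · e_{M₁−m−ℓ}(z_1,…,z_{M₁}) · e_{M₁−n+ℓ}(z_1,…,z_{M₁}), where ẑ_i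 indicates that the variable z_i is omitted. -/
/-!
Write `e_q` for `esymmZ univ z q` and `e_q⁽ⁱ⁾` for the same polynomial with `z i` omitted. Two
facts drive everything: `e_q = e_q⁽ⁱ⁾ + z i * e_{q-1}⁽ⁱ⁾`, and `∑ i, e_q⁽ⁱ⁾ = (M - q) e_q`, since
each `q`-subset misses exactly `M - q` indices. With `A = M - m`, `B = M - n` and
`S(p, q) = ∑ i, z i * e_p⁽ⁱ⁾ * e_q⁽ⁱ⁾`, they turn the left-hand side into `A e_A e_B - S(A - 1, B)`
and give the recursion `S(p, q) = (q + 1 - p) e_p e_{q+1} + S(p - 1, q + 1)`. Unrolling it down to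
`S(-1, ·) = 0` yields the sum over `1 ≤ ℓ ≤ A`, whose terms with `ℓ > n` vanish because then
`e_{B+ℓ}` has degree above `M`.
-/

open Finset

/-- The elementary symmetric polynomial of degree `q ∈ ℤ` in the variables `z i`, `i ∈ s`,
with the convention that it vanishes for `q < 0` (and also for `q > #s`, since then
there are no subsets of cardinality `q`). -/
noncomputable def esymmZ {M : ℕ} (s : Finset (Fin M)) (z : Fin M → ℂ) (q : ℤ) : ℂ :=
  if q < 0 then 0 else ∑ S ∈ s.powersetCard q.toNat, ∏ i ∈ S, z i

section

variable {M : ℕ} (z : Fin M → ℂ)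

lemma esymmZ_of_neg (s : Finset (Fin M)) {q : ℤ} (hq : q < 0) : esymmZ s z q = 0 := by
  simp [esymmZ, hq]

lemma esymmZ_of_card_lt (s : Finset (Fin M)) {q : ℤ} (hq : (#s : ℤ) < q) : esymmZ s z q = 0 := by
  rw [esymmZ, if_neg (by omega), powersetCard_eq_empty.2 (by omega), sum_empty]

lemma esymmZ_univ_eq_erase_add (i : Fin M) (q : ℤ) :
    esymmZ univ z q = esymmZ (univ.erase i) z q + z i * esymmZ (univ.erase i) z (q - 1) := by
  obtain hq | rfl | hq := lt_trichotomy q 0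
  · simp [esymmZ_of_neg, hq, show q - 1 < 0 by omega]
  · simp [esymmZ]
  obtain ⟨k, rfl⟩ : ∃ k : ℕ, q = k + 1 := ⟨q.toNat - 1, by omega⟩
  have hi : i ∉ univ.erase i := notMem_erase i univ
  have hsplit : powersetCard (k + 1) univ
      = powersetCard (k + 1) (univ.erase i) ∪ (powersetCard k (univ.erase i)).image (insert i) := by
    rw [← powersetCard_succ_insert hi, insert_erase (mem_univ i)]
  have hdisj : Disjoint (powersetCard (k + 1) (univ.erase i))
      ((powersetCard k (univ.erase i)).image (insert i)) := by
    simp only [disjoint_right, mem_image, mem_powersetCard]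
    rintro _ ⟨T, -, rfl⟩ ⟨hsub, -⟩
    exact hi (hsub (mem_insert_self i T))
  have hinj : Set.InjOn (insert i) (powersetCard k (univ.erase i) : Set (Finset (Fin M))) := by
    intro S hS T hT hST
    have hiS : i ∉ S := fun h => hi ((mem_powersetCard.1 hS).1 h)
    have hiT : i ∉ T := fun h => hi ((mem_powersetCard.1 hT).1 h)
    rw [← erase_insert hiS, ← erase_insert hiT]
    exact congrArg (·.erase i) hST
  simp only [esymmZ, show ¬ ((k : ℤ) + 1 < 0) by omega, show ¬ ((k : ℤ) + 1 - 1 < 0) by omega,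
    if_false, show ((k : ℤ) + 1).toNat = k + 1 by omega, show ((k : ℤ) + 1 - 1).toNat = k by omega]
  rw [hsplit, sum_union hdisj, sum_image hinj, mul_sum]
  congr 1
  exact sum_congr rfl fun S hS => prod_insert fun hiS => hi ((mem_powersetCard.1 hS).1 hiS)

lemma sum_esymmZ_erase (q : ℤ) :
    ∑ i, esymmZ (univ.erase i) z q = ((M : ℂ) - q) * esymmZ univ z q := by
  by_cases hneg : q < 0
  · simp [esymmZ_of_neg, hneg]
  by_cases hbig : (M : ℤ) < q
  · rw [esymmZ_of_card_lt z univ (by simpa using hbig), mul_zero]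
    exact sum_eq_zero fun i _ => esymmZ_of_card_lt z _ (by simp; omega)
  obtain ⟨k, rfl⟩ : ∃ k : ℕ, q = k := ⟨q.toNat, by omega⟩
  simp only [esymmZ, hneg, if_false, Int.toNat_natCast, mul_sum]
  rw [sum_comm' (s' := fun S => univ.filter (· ∉ S)) (t' := powersetCard k univ)]
  · refine sum_congr rfl fun S hS => ?_
    have hcompl : univ.filter (· ∉ S) = Sᶜ := by ext; simp
    rw [sum_const, hcompl, card_compl, Fintype.card_fin, (mem_powersetCard.1 hS).2, nsmul_eq_mul,
      Nat.cast_sub (by omega), Int.cast_natCast]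
  · intro i S
    simp [subset_erase, and_comm]

lemma sum_mul_esymmZ_erase_sub_one (q : ℤ) :
    ∑ i, z i * esymmZ (univ.erase i) z (q - 1) = q * esymmZ univ z q := by
  have hterm : ∀ i, z i * esymmZ (univ.erase i) z (q - 1)
      = esymmZ univ z q - esymmZ (univ.erase i) z q := fun i => by
    rw [esymmZ_univ_eq_erase_add z i q]; ring
  rw [sum_congr rfl fun i _ => hterm i, sum_sub_distrib, sum_esymmZ_erase, sum_const, card_univ,
    Fintype.card_fin, nsmul_eq_mul]
  ring

noncomputable def crossSum (p q : ℤ) : ℂ :=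
  ∑ i, z i * esymmZ (univ.erase i) z p * esymmZ (univ.erase i) z q

lemma crossSum_of_neg {p : ℤ} (hp : p < 0) (q : ℤ) : crossSum z p q = 0 := by
  simp [crossSum, esymmZ_of_neg z _ hp]

lemma sum_esymmZ_erase_mul_esymmZ_erase (u v : ℤ) :
    ∑ i, esymmZ (univ.erase i) z u * esymmZ (univ.erase i) z v
      = ((M : ℂ) - u) * esymmZ univ z u * esymmZ univ z v - crossSum z (v - 1) u := by
  have hterm : ∀ i, esymmZ (univ.erase i) z u * esymmZ (univ.erase i) z v
      = esymmZ univ z v * esymmZ (univ.erase i) z u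
        - z i * esymmZ (univ.erase i) z (v - 1) * esymmZ (univ.erase i) z u := fun i => by
    rw [esymmZ_univ_eq_erase_add z i v]; ring
  rw [sum_congr rfl fun i _ => hterm i, sum_sub_distrib, ← mul_sum, sum_esymmZ_erase, crossSum]
  ring

lemma crossSum_eq_add_crossSum (p q : ℤ) :
    crossSum z p q = ((q : ℂ) + 1 - p) * esymmZ univ z p * esymmZ univ z (q + 1)
      + crossSum z (p - 1) (q + 1) := by
  have hterm : ∀ i, z i * esymmZ (univ.erase i) z p * esymmZ (univ.erase i) z q
      = esymmZ univ z (q + 1) * esymmZ (univ.erase i) z p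
        - esymmZ (univ.erase i) z (q + 1) * esymmZ (univ.erase i) z p := fun i => by
    rw [esymmZ_univ_eq_erase_add z i (q + 1), add_sub_cancel_right]; ring
  rw [crossSum, sum_congr rfl fun i _ => hterm i, sum_sub_distrib, ← mul_sum, sum_esymmZ_erase,
    sum_esymmZ_erase_mul_esymmZ_erase]
  push_cast
  ring

lemma crossSum_sub_one_eq_sum (a : ℕ) (b : ℤ) :
    crossSum z (a - 1) b = ∑ ℓ ∈ Icc 1 a,
      ((b : ℂ) - a + 2 * ℓ) * esymmZ univ z (a - ℓ) * esymmZ univ z (b + ℓ) := by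
  induction a generalizing b with
  | zero => simp [crossSum_of_neg]
  | succ a ih =>
    rw [← sum_Ioc_add_eq_sum_Icc (by omega), ← Icc_add_one_left_eq_Ioc, ← map_add_right_Icc,
      sum_map, Nat.cast_succ, add_sub_cancel_right, crossSum_eq_add_crossSum, ih, add_comm]
    congr 1
    · refine sum_congr rfl fun ℓ _ => ?_
      simp only [addRightEmbedding_apply]
      push_cast
      ring_nf
    · push_cast
      ring_nf

lemma crossSum_sub_one_eq_sum_Icc_min (a n : ℕ) :
    crossSum z (a - 1) (M - n) = ∑ ℓ ∈ Icc 1 (min a n),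
      ((M : ℂ) - n - a + 2 * ℓ) * esymmZ univ z (a - ℓ) * esymmZ univ z (M - n + ℓ) := by
  rw [crossSum_sub_one_eq_sum]
  push_cast
  refine (sum_subset (Icc_subset_Icc_right (min_le_left a n)) fun ℓ hℓa hℓ => ?_).symm
  simp only [mem_Icc, le_min_iff, not_and, not_le] at hℓa hℓ
  rw [esymmZ_of_card_lt z univ (q := M - n + ℓ) (by simp; omega), mul_zero]

lemma sum_sq_mul_esymmZ_erase_mul_esymmZ_erase (p q : ℤ) :
    ∑ i, z i ^ 2 * esymmZ (univ.erase i) z (p - 1) * esymmZ (univ.erase i) z (q - 1)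
      = p * esymmZ univ z p * esymmZ univ z q - crossSum z (p - 1) q := by
  have hterm : ∀ i, z i ^ 2 * esymmZ (univ.erase i) z (p - 1) * esymmZ (univ.erase i) z (q - 1)
      = esymmZ univ z q * (z i * esymmZ (univ.erase i) z (p - 1))
        - z i * esymmZ (univ.erase i) z (p - 1) * esymmZ (univ.erase i) z q := fun i => by
    rw [esymmZ_univ_eq_erase_add z i q]; ring
  rw [sum_congr rfl fun i _ => hterm i, sum_sub_distrib, ← mul_sum, sum_mul_esymmZ_erase_sub_one,
    crossSum]
  ring

end

theorem stmt5_general (M₁ : ℕ) (m n : ℕ) (hm : m ≤ M₁)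
    (z : Fin M₁ → ℂ) :
    ∑ i : Fin M₁, z i ^ 2 * esymmZ (univ.erase i) z ((M₁ : ℤ) - m - 1) *
        esymmZ (univ.erase i) z ((M₁ : ℤ) - n - 1)
    = ((M₁ : ℂ) - m) * esymmZ univ z ((M₁ : ℤ) - m) * esymmZ univ z ((M₁ : ℤ) - n)
      - ∑ ℓ ∈ Finset.Icc 1 (min (M₁ - m) n),
          ((m : ℂ) - n + 2 * ℓ) * esymmZ univ z ((M₁ : ℤ) - m - ℓ) *
            esymmZ univ z ((M₁ : ℤ) - n + ℓ) := by
  have hA : (M₁ : ℤ) - m = ((M₁ - m : ℕ) : ℤ) := by omega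
  rw [sum_sq_mul_esymmZ_erase_mul_esymmZ_erase, hA, crossSum_sub_one_eq_sum_Icc_min, ← hA]
  push_cast
  rw [Nat.cast_sub hm, sub_sub_sub_cancel_left]

theorem stmt5 (M₁ : ℕ) (hM₁ : 0 < M₁) (m n : ℕ) (hnm : n ≤ m) (hm : m ≤ M₁)
    (z : Fin M₁ → ℂ) :
    ∑ i : Fin M₁, z i ^ 2 * esymmZ (univ.erase i) z ((M₁ : ℤ) - m - 1) *
        esymmZ (univ.erase i) z ((M₁ : ℤ) - n - 1)
    = ((M₁ : ℂ) - m) * esymmZ univ z ((M₁ : ℤ) - m) * esymmZ univ z ((M₁ : ℤ) - n)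
      - ∑ ℓ ∈ Finset.Icc 1 (min (M₁ - m) n),
          ((m : ℂ) - n + 2 * ℓ) * esymmZ univ z ((M₁ : ℤ) - m - ℓ) *
            esymmZ univ z ((M₁ : ℤ) - n + ℓ) :=
  stmt5_general M₁ m n hm z
end

section
/- Let M₁ be a positive integer, let n be an integer with 0 ≤ n ≤ M₁, and let z_1, …, z_{M₁} ∈ ℂ. Then Σ_{i=1}^{M₁} z_i e_{M₁−n−1}(z_1,…,ẑ_i,…,z_{M₁}) + Σ_{i≠j} z_i e_{M₁−n−1}(z_1,…,ẑ_i,…,ẑ_j,…,z_{M₁}) + (1/2) Σ_{i≠j} z_i z_j e_{M₁−n−2}(z_1,…,ẑ_i,…,ẑ_j,…,z_{M₁}) = ( M₁(M₁+1)/2 − n(n+1)/2 ) · e_{M₁−n}(z_1,…,z_{M₁}), where the sums Σ_{i≠j} range over ordered pairs (i,j) with i, j ∈ {1,…,M₁} and i ≠ j, and ẑ_i indicates that the variable z_i is omitted. -/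
open Finset

lemma L1 {M : ℕ} (z : Fin M → ℂ) (s : Finset (Fin M)) (k : ℕ) :
    ∑ i ∈ s, z i * ∑ S ∈ (s.erase i).powersetCard k, ∏ j ∈ S, z j
      = ((k + 1 : ℕ) : ℂ) * ∑ T ∈ s.powersetCard (k + 1), ∏ j ∈ T, z j := by
  rw [Finset.mul_sum]
  have hR : ∀ T ∈ s.powersetCard (k + 1),
      ((k + 1 : ℕ) : ℂ) * ∏ j ∈ T, z j = ∑ i ∈ T, ∏ j ∈ T, z j := by
    intro T hT
    rw [Finset.sum_const, (Finset.mem_powersetCard.mp hT).2, nsmul_eq_mul]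
  rw [Finset.sum_congr rfl hR]
  simp_rw [Finset.mul_sum]
  rw [Finset.sum_sigma', Finset.sum_sigma']
  refine Finset.sum_nbij' (fun p => ⟨insert p.1 p.2, p.1⟩) (fun p => ⟨p.2, p.1.erase p.2⟩)
    ?_ ?_ ?_ ?_ ?_
  · rintro ⟨i, S⟩ hp
    simp only [Finset.mem_sigma, Finset.mem_powersetCard] at hp ⊢
    obtain ⟨hi, hS, hcard⟩ := hp
    have hiS : i ∉ S := fun h => (Finset.mem_erase.mp (hS h)).1 rfl
    refine ⟨⟨Finset.insert_subset hi (hS.trans (Finset.erase_subset _ _)), ?_⟩,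
      Finset.mem_insert_self _ _⟩
    rw [Finset.card_insert_of_notMem hiS, hcard]
  · rintro ⟨T, i⟩ hp
    simp only [Finset.mem_sigma, Finset.mem_powersetCard] at hp ⊢
    obtain ⟨⟨hT, hcard⟩, hi⟩ := hp
    refine ⟨hT hi, ?_, ?_⟩
    · intro x hx
      exact Finset.mem_erase.mpr ⟨(Finset.mem_erase.mp hx).1, hT (Finset.mem_of_mem_erase hx)⟩
    · rw [Finset.card_erase_of_mem hi, hcard]; rfl
  · rintro ⟨i, S⟩ hp
    simp only [Finset.mem_sigma, Finset.mem_powersetCard] at hp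
    obtain ⟨hi, hS, hcard⟩ := hp
    have hiS : i ∉ S := fun h => (Finset.mem_erase.mp (hS h)).1 rfl
    simp [Finset.erase_insert hiS]
  · rintro ⟨T, i⟩ hp
    simp only [Finset.mem_sigma, Finset.mem_powersetCard] at hp
    simp [Finset.insert_erase hp.2]
  · rintro ⟨i, S⟩ hp
    simp only [Finset.mem_sigma, Finset.mem_powersetCard] at hp
    obtain ⟨hi, hS, hcard⟩ := hp
    have hiS : i ∉ S := fun h => (Finset.mem_erase.mp (hS h)).1 rfl
    exact (Finset.prod_insert hiS).symm

lemma L2 {M : ℕ} (s : Finset (Fin M)) (k : ℕ) (f : Fin M → Finset (Fin M) → ℂ) :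
    ∑ i ∈ s, ∑ S ∈ (s.erase i).powersetCard k, f i S
      = ∑ S ∈ s.powersetCard k, ∑ i ∈ s \ S, f i S := by
  refine Finset.sum_comm' ?_
  intro i S
  simp only [Finset.mem_powersetCard, Finset.subset_erase, Finset.mem_sdiff]
  tauto

theorem stmt6 (M₁ : ℕ) (hM₁ : 0 < M₁) (n : ℕ) (hn : n ≤ M₁) (z : Fin M₁ → ℂ) :
    (∑ i : Fin M₁, z i * esymmZ (univ.erase i) z ((M₁ : ℤ) - n - 1))
      + (∑ i : Fin M₁, ∑ j ∈ univ.erase i,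
          z i * esymmZ ((univ.erase i).erase j) z ((M₁ : ℤ) - n - 1))
      + (1 / 2) * ∑ i : Fin M₁, ∑ j ∈ univ.erase i,
          z i * z j * esymmZ ((univ.erase i).erase j) z ((M₁ : ℤ) - n - 2)
    = ((M₁ : ℂ) * (M₁ + 1) / 2 - (n : ℂ) * (n + 1) / 2) * esymmZ univ z ((M₁ : ℤ) - n) := by
  obtain ⟨q, hq⟩ : ∃ q : ℕ, M₁ = n + q := ⟨M₁ - n, by omega⟩
  subst hq
  have hq1 : ((n + q : ℕ) : ℤ) - n = (q : ℤ) := by push_cast; ring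
  have hq2 : ((n + q : ℕ) : ℤ) - n - 1 = (q : ℤ) - 1 := by push_cast; ring
  have hq3 : ((n + q : ℕ) : ℤ) - n - 2 = (q : ℤ) - 2 := by push_cast; ring
  rw [hq1]
  -- e_q notation
  set e : ℕ → ℂ := fun m => ∑ T ∈ (univ : Finset (Fin (n+q))).powersetCard m, ∏ j ∈ T, z j
    with he
  have hesymm : esymmZ univ z ((q : ℤ)) = e q := by
    rw [esymmZ, if_neg (by omega)]
    simp [he]
  rcases Nat.eq_zero_or_pos q with hq0 | hqpos
  · -- q = 0 : all shifted indices negative, RHS coefficient zero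
    subst hq0
    have h1 : ((0 : ℕ) : ℤ) - 1 < 0 := by norm_num
    have h2 : ((0 : ℕ) : ℤ) - 2 < 0 := by norm_num
    simp only [esymmZ, if_pos h1, if_pos h2]
    simp
  · obtain ⟨p, hp⟩ : ∃ p : ℕ, q = p + 1 := ⟨q - 1, by omega⟩
    subst hp
    have hI1 : ∀ s : Finset (Fin (n + (p+1))), esymmZ s z ((p+1 : ℕ) - 1)
        = ∑ S ∈ s.powersetCard p, ∏ j ∈ S, z j := by
      intro s
      rw [esymmZ, if_neg (by push_cast; omega)]
      congr 1
      · congr 1; push_cast; omega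
    -- Term 1
    have hT1 : (∑ i : Fin (n+(p+1)), z i * esymmZ (univ.erase i) z ((p+1 : ℕ) - 1))
        = ((p + 1 : ℕ) : ℂ) * e (p + 1) := by
      simp_rw [hI1]
      exact L1 z univ p
    -- Term 2
    have hT2 : (∑ i : Fin (n+(p+1)), ∑ j ∈ univ.erase i,
          z i * esymmZ ((univ.erase i).erase j) z ((p+1 : ℕ) - 1))
        = ((n : ℕ) : ℂ) * (((p + 1 : ℕ) : ℂ) * e (p + 1)) := by
      simp_rw [hI1, ← Finset.mul_sum]
      have inner : ∀ i : Fin (n+(p+1)),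
          ∑ j ∈ univ.erase i, ∑ S ∈ ((univ.erase i).erase j).powersetCard p, ∏ x ∈ S, z x
            = ((n : ℕ) : ℂ) * ∑ S ∈ (univ.erase i).powersetCard p, ∏ x ∈ S, z x := by
        intro i
        rw [L2 (univ.erase i) p (fun _ S => ∏ x ∈ S, z x), Finset.mul_sum]
        refine Finset.sum_congr rfl ?_
        intro S hS
        obtain ⟨hSs, hcard⟩ := Finset.mem_powersetCard.mp hS
        rw [Finset.sum_const, Finset.card_sdiff_of_subset hSs, Finset.card_erase_of_mem (Finset.mem_univ _),
          Finset.card_univ, Fintype.card_fin, hcard, nsmul_eq_mul]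
        congr 2
        omega
      simp_rw [inner]
      have h' := hT1
      simp_rw [hI1] at h'
      calc ∑ i : Fin (n+(p+1)), z i *
              (((n : ℕ) : ℂ) * ∑ S ∈ (univ.erase i).powersetCard p, ∏ x ∈ S, z x)
          = ((n : ℕ) : ℂ) * ∑ i : Fin (n+(p+1)),
              z i * ∑ S ∈ (univ.erase i).powersetCard p, ∏ x ∈ S, z x := by
            rw [Finset.mul_sum]; exact Finset.sum_congr rfl fun i _ => by ring
        _ = _ := by rw [h']
    -- Term 3
    have hT3 : (∑ i : Fin (n+(p+1)), ∑ j ∈ univ.erase i,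
          z i * z j * esymmZ ((univ.erase i).erase j) z ((p+1 : ℕ) - 2))
        = ((p : ℕ) : ℂ) * (((p + 1 : ℕ) : ℂ) * e (p + 1)) := by
      rcases Nat.eq_zero_or_pos p with hp0 | hppos
      · subst hp0
        have hneg : ((0+1 : ℕ) : ℤ) - 2 < 0 := by norm_num
        simp only [esymmZ, if_pos hneg]
        simp
      · obtain ⟨r, hr⟩ : ∃ r : ℕ, p = r + 1 := ⟨p - 1, by omega⟩
        subst hr
        have hI2 : ∀ s : Finset (Fin (n + (r+1+1))), esymmZ s z ((r+1+1 : ℕ) - 2)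
            = ∑ S ∈ s.powersetCard r, ∏ j ∈ S, z j := by
          intro s
          rw [esymmZ, if_neg (by push_cast; omega)]
          congr 1
          · congr 1; push_cast; omega
        simp_rw [hI2]
        have inner : ∀ i : Fin (n+(r+1+1)),
            ∑ j ∈ univ.erase i, z i * z j * ∑ S ∈ ((univ.erase i).erase j).powersetCard r,
              ∏ x ∈ S, z x
            = z i * (((r + 1 : ℕ) : ℂ) *
                ∑ S ∈ (univ.erase i).powersetCard (r+1), ∏ x ∈ S, z x) := by
          intro i
          rw [← L1 z (univ.erase i) r, Finset.mul_sum]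
          refine Finset.sum_congr rfl ?_
          intro j _
          ring
        simp_rw [inner]
        have := hT1
        simp_rw [hI1] at this
        calc ∑ i : Fin (n+(r+1+1)), z i * (((r + 1 : ℕ) : ℂ) *
                ∑ S ∈ (univ.erase i).powersetCard (r+1), ∏ x ∈ S, z x)
            = ((r + 1 : ℕ) : ℂ) * ∑ i : Fin (n+(r+1+1)),
                z i * ∑ S ∈ (univ.erase i).powersetCard (r+1), ∏ x ∈ S, z x := by
              rw [Finset.mul_sum]; refine Finset.sum_congr rfl fun i _ => by ring
          _ = ((r + 1 : ℕ) : ℂ) * (((r + 1 + 1 : ℕ) : ℂ) * e (r + 1 + 1)) := by rw [this]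
          _ = _ := by push_cast; ring
    rw [hT1, hT2, hT3, hesymm]
    push_cast
    ring
end

section
/- Let m ≥ 1 and n ≥ 0 be integers. Then, as an identity of rational numbers, m / (m! · n!) = Σ_{ℓ=1}^{m} (n − m + 2ℓ) / ((m−ℓ)! · (n+ℓ)!). -/
/-!
The sum telescopes. With `g j = (m - j) / ((m - j)! * (n + j)!)`, the `ℓ`-th summand equals
`g (ℓ - 1) - g ℓ`, because `n - m + 2ℓ = (n + ℓ) - (m - ℓ)`. Hence the sum is `g 0 - g m`,
and `g 0` is the left-hand side while `g m = 0`.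
-/

open Finset
open scoped Nat

lemma add_one_sub_div_factorial_mul_factorial {K : Type*} [Field K] [CharZero K] (a b : ℕ) :
    ((b : K) + 1 - a) / ((a ! : K) * ((b + 1)! : K))
      = ((a : K) + 1) / (((a + 1)! : K) * (b ! : K)) - (a : K) / ((a ! : K) * ((b + 1)! : K)) := by
  rw [Nat.factorial_succ, Nat.factorial_succ]
  push_cast
  field_simp

theorem stmt16_general (m n : ℕ) :
    (m : ℚ) / ((Nat.factorial m : ℚ) * (Nat.factorial n : ℚ))
    = ∑ ℓ ∈ Finset.Icc 1 m,
        ((n : ℚ) - (m : ℚ) + 2 * (ℓ : ℚ)) /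
          ((Nat.factorial (m - ℓ) : ℚ) * (Nat.factorial (n + ℓ) : ℚ)) := by
  set g : ℕ → ℚ := fun j => ((m - j : ℕ) : ℚ) / (((m - j)! : ℚ) * ((n + j)! : ℚ))
  have hterm : ∀ i ∈ range m,
      ((n : ℚ) - m + 2 * ((1 + i : ℕ) : ℚ)) / (((m - (1 + i))! : ℚ) * ((n + (1 + i))! : ℚ))
        = g i - g (i + 1) := by
    intro i hi
    obtain ⟨a, rfl⟩ : ∃ a, m = a + 1 + i := ⟨m - (i + 1), by grind⟩
    have hstep := add_one_sub_div_factorial_mul_factorial (K := ℚ) a (n + i)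
    simp only [g, show a + 1 + i - (1 + i) = a by omega, show a + 1 + i - i = a + 1 by omega,
      show a + 1 + i - (i + 1) = a by omega, show n + (1 + i) = n + i + 1 by omega,
      show n + (i + 1) = n + i + 1 by omega]
    push_cast at hstep ⊢
    convert hstep using 2
    ring
  rw [← Ico_add_one_right_eq_Icc, sum_Ico_eq_sum_range, Nat.add_sub_cancel, sum_congr rfl hterm,
    sum_range_sub']
  simp [g]

theorem stmt16 (m n : ℕ) (hm : 1 ≤ m) :
    (m : ℚ) / ((Nat.factorial m : ℚ) * (Nat.factorial n : ℚ))
    = ∑ ℓ ∈ Finset.Icc 1 m,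
        ((n : ℚ) - (m : ℚ) + 2 * (ℓ : ℚ)) /
          ((Nat.factorial (m - ℓ) : ℚ) * (Nat.factorial (n + ℓ) : ℚ)) :=
  stmt16_general m n
end

section
/- Let M ≥ 1 be an integer, let N ∈ ℂ be arbitrary, let z_1, …, z_M ∈ ℂ be pairwise distinct, and let x, y ∈ ℂ with x ≠ y. Define ψ(z_1,…,z_M, x, y) = ∏_{i=1}^{M} (x − z_i)(y − z_i). Then Σ_{i=1}^{M} [ (1/2) z_i² ∂²ψ/∂z_i² + Σ_{j≠i} (2 z_i²/(z_i − z_j)) ∂ψ/∂z_i − ((N−3)/2) z_i ∂ψ/∂z_i ] = M(2M − N + 2) ψ + [ −x² ∂²ψ/∂x² − y² ∂²ψ/∂y² + ((N−3)/2)( x ∂ψ/∂x + y ∂ψ/∂y ) ] − (1/(x−y)) [ x² ∂ψ/∂x − y² ∂ψ/∂y ]. -/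
/-!
Write `P_k = (x - z_k)(y - z_k)`, so that `ψ = ∏ P_k`. As `ψ` is quadratic in each `z_i` and a
product of linear factors in `x` and in `y`, every derivative in the identity is a sum of
products of the `P_k` with one or two factors removed. The terms carrying `1 / (z_i - z_j)` are
symmetrised over the pair `{i, j}`: for each pair they combine, by a polynomial identity in
`z_i, z_j, x, y`, into `2ψ` minus the `(i, j)`-terms of the second derivatives in `x` and `y`.
The remaining one-index terms give `(4 - N) M ψ` and the first derivatives in `x` and `y`, through
`(x² (y - a) - y² (x - a)) / (x - y) = x y - a (x + y)`.
-/

open Finset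

/-- `ψ(z_1,…,z_M,x,y) = ∏_{i=1}^M (x − z_i)(y − z_i)`. -/
noncomputable def ψ {M : ℕ} (z : Fin M → ℂ) (x y : ℂ) : ℂ :=
  ∏ i : Fin M, (x - z i) * (y - z i)

variable {ι : Type*}

-- `ψ z x y` is `ψOn z univ x y` by definition.
def ψOn {R : Type*} [CommRing R] (z : ι → R) (s : Finset ι) (x y : R) : R :=
  ∏ k ∈ s, (x - z k) * (y - z k)

section CommRing

variable {R : Type*} [CommRing R] (z : ι → R)

theorem ψOn_comm (s : Finset ι) (x y : R) : ψOn z s x y = ψOn z s y x :=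
  prod_congr rfl fun _ _ => mul_comm _ _

variable [DecidableEq ι]

theorem mul_ψOn_erase {s : Finset ι} {i : ι} (hi : i ∈ s) (x y : R) :
    (x - z i) * (y - z i) * ψOn z (s.erase i) x y = ψOn z s x y :=
  mul_prod_erase s (fun k => (x - z k) * (y - z k)) hi

theorem ψOn_update_of_mem {s : Finset ι} {i : ι} (hi : i ∈ s) (t x y : R) :
    ψOn (Function.update z i t) s x y = (x - t) * (y - t) * ψOn z (s.erase i) x y := by
  rw [← mul_ψOn_erase _ hi, Function.update_self]
  congr 1
  exact prod_congr rfl fun j hj => by rw [Function.update_of_ne (ne_of_mem_erase hj)]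

end CommRing

section Deriv

variable {𝕜 : Type*} [NontriviallyNormedField 𝕜]

theorem hasDerivAt_sub_mul_sub_mul (x y k t : 𝕜) :
    HasDerivAt (fun t => (x - t) * (y - t) * k) ((2 * t - x - y) * k) t := by
  have := (((hasDerivAt_id t).const_sub x).mul ((hasDerivAt_id t).const_sub y)).mul_const k
  exact this.congr_deriv (by simp only [id]; ring)

theorem deriv_sub_mul_sub_mul (x y k : 𝕜) :
    deriv (fun t => (x - t) * (y - t) * k) = fun t => (2 * t - x - y) * k :=
  funext fun t => (hasDerivAt_sub_mul_sub_mul x y k t).deriv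

theorem iteratedDeriv_two_sub_mul_sub_mul (x y k t : 𝕜) :
    iteratedDeriv 2 (fun t => (x - t) * (y - t) * k) t = 2 * k := by
  rw [iteratedDeriv_succ, iteratedDeriv_one, deriv_sub_mul_sub_mul]
  exact ((((hasDerivAt_id t).const_mul 2).sub_const x).sub_const y).mul_const k
    |>.deriv.trans (by simp)

variable [DecidableEq ι] (z : ι → 𝕜) (s : Finset ι)

theorem hasDerivAt_ψOn_left (x y : 𝕜) :
    HasDerivAt (fun t => ψOn z s t y) (∑ i ∈ s, ψOn z (s.erase i) x y * (y - z i)) x := by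
  simpa [ψOn] using HasDerivAt.fun_finsetProd (u := s)
    (f := fun i t => (t - z i) * (y - z i)) fun i _ =>
      ((hasDerivAt_id x).sub_const (z i)).mul_const (y - z i)

theorem deriv_ψOn_left (y : 𝕜) :
    deriv (fun t => ψOn z s t y) = fun x => ∑ i ∈ s, ψOn z (s.erase i) x y * (y - z i) :=
  funext fun x => (hasDerivAt_ψOn_left z s x y).deriv

theorem iteratedDeriv_two_ψOn_left (x y : 𝕜) :
    iteratedDeriv 2 (fun t => ψOn z s t y) x =
      ∑ i ∈ s, ∑ j ∈ s.erase i, ψOn z ((s.erase i).erase j) x y * (y - z j) * (y - z i) := by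
  rw [iteratedDeriv_succ, iteratedDeriv_one, deriv_ψOn_left]
  exact (HasDerivAt.fun_sum fun i _ =>
    (hasDerivAt_ψOn_left z (s.erase i) x y).mul_const (y - z i)).deriv.trans (by simp [sum_mul])

theorem deriv_ψOn_right (x y : 𝕜) :
    deriv (fun t => ψOn z s x t) y = ∑ i ∈ s, ψOn z (s.erase i) x y * (x - z i) := by
  rw [funext fun t => ψOn_comm z s x t, deriv_ψOn_left]
  exact sum_congr rfl fun i _ => by rw [ψOn_comm]

theorem iteratedDeriv_two_ψOn_right (x y : 𝕜) :
    iteratedDeriv 2 (fun t => ψOn z s x t) y =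
      ∑ i ∈ s, ∑ j ∈ s.erase i, ψOn z ((s.erase i).erase j) x y * (x - z j) * (x - z i) := by
  rw [funext fun t => ψOn_comm z s x t, iteratedDeriv_two_ψOn_left]
  exact sum_congr rfl fun i _ => sum_congr rfl fun j _ => by rw [ψOn_comm]

end Deriv

section Sum

variable [DecidableEq ι]

theorem sum_sum_erase_swap {β : Type*} [AddCommMonoid β] (s : Finset ι) (f : ι → ι → β) :
    ∑ i ∈ s, ∑ j ∈ s.erase i, f j i = ∑ i ∈ s, ∑ j ∈ s.erase i, f i j :=
  sum_comm' fun i j => by simp only [mem_erase]; grind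

theorem sum_sum_erase_eq_of_add_swap {β : Type*} [AddCommMonoid β] [IsAddTorsionFree β]
    (s : Finset ι) {f g : ι → ι → β}
    (h : ∀ i ∈ s, ∀ j ∈ s.erase i, f i j + f j i = g i j + g j i) :
    ∑ i ∈ s, ∑ j ∈ s.erase i, f i j = ∑ i ∈ s, ∑ j ∈ s.erase i, g i j := by
  have hsymm (f : ι → ι → β) :
      ∑ i ∈ s, ∑ j ∈ s.erase i, (f i j + f j i) = 2 • ∑ i ∈ s, ∑ j ∈ s.erase i, f i j := by
    rw [sum_congr rfl fun i _ => sum_add_distrib, sum_add_distrib, sum_sum_erase_swap, two_nsmul]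
  apply nsmul_right_injective two_ne_zero
  simp only [← hsymm]
  exact sum_congr rfl fun i hi => sum_congr rfl (h i hi)

end Sum

section Field

variable {K : Type*} [Field K]

theorem twoBody_add_swap {a b : K} (hab : a ≠ b) (x y : K) :
    2 * a ^ 2 / (a - b) * ((2 * a - x - y) * ((x - b) * (y - b)))
        + 2 * b ^ 2 / (b - a) * ((2 * b - x - y) * ((x - a) * (y - a)))
      = 2 * (2 * ((x - a) * (y - a)) * ((x - b) * (y - b)))
        - 2 * x ^ 2 * ((y - a) * (y - b)) - 2 * y ^ 2 * ((x - a) * (x - b)) := by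
  have hab' : a - b ≠ 0 := sub_ne_zero.2 hab
  have hba : b - a ≠ 0 := sub_ne_zero.2 hab.symm
  field_simp
  ring

theorem oneBody_eq [CharZero K] {x y : K} (hxy : x ≠ y) (N a : K) :
    a ^ 2 - (N - 3) / 2 * a * (2 * a - x - y)
      = (4 - N) * ((x - a) * (y - a)) + (N - 3) / 2 * (x * (y - a) + y * (x - a))
        - 1 / (x - y) * (x ^ 2 * (y - a) - y ^ 2 * (x - a)) := by
  have hxy' : x - y ≠ 0 := sub_ne_zero.2 hxy
  field_simp
  ring

variable [DecidableEq ι] (z : ι → K) (s : Finset ι)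

theorem sum_sum_erase_twoBody [CharZero K] (hz : Set.InjOn z s) (x y : K) :
    ∑ i ∈ s, ∑ j ∈ s.erase i,
        2 * z i ^ 2 / (z i - z j) * ((2 * z i - x - y) * ψOn z (s.erase i) x y)
      = 2 * #s * (#s - 1) * ψOn z s x y
        - x ^ 2 * ∑ i ∈ s, ∑ j ∈ s.erase i,
            ψOn z ((s.erase i).erase j) x y * (y - z j) * (y - z i)
        - y ^ 2 * ∑ i ∈ s, ∑ j ∈ s.erase i,
            ψOn z ((s.erase i).erase j) x y * (x - z j) * (x - z i) := by
  rw [sum_sum_erase_eq_of_add_swap s (g := fun i j => 2 * ψOn z s x y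
    - x ^ 2 * (ψOn z ((s.erase i).erase j) x y * (y - z j) * (y - z i))
    - y ^ 2 * (ψOn z ((s.erase i).erase j) x y * (x - z j) * (x - z i)))]
  · have hcard : ∀ i ∈ s, (#(s.erase i) : K) = #s - 1 := fun i hi => by
      rw [card_erase_of_mem hi, Nat.cast_pred (card_pos.2 ⟨i, hi⟩)]
    simp only [sum_sub_distrib, ← mul_sum, sum_const, nsmul_eq_mul]
    rw [sum_congr rfl fun i hi => by rw [hcard i hi], sum_const, nsmul_eq_mul]
    ring
  · intro i hi j hj
    obtain ⟨hji, hj⟩ := mem_erase.1 hj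
    have hij : i ∈ s.erase j := mem_erase.2 ⟨Ne.symm hji, hi⟩
    have hci := (mul_ψOn_erase z (mem_erase.2 ⟨hji, hj⟩) x y).symm
    have hcj := (mul_ψOn_erase z hij x y).symm
    have hψ := (mul_ψOn_erase z hi x y).symm
    rw [erase_right_comm] at hcj
    rw [erase_right_comm (a := j), hci, hcj, hψ, hci]
    linear_combination ψOn z ((s.erase i).erase j) x y *
      twoBody_add_swap (fun h => hji (hz hj hi h.symm)) x y

theorem sum_oneBody [CharZero K] {x y : K} (hxy : x ≠ y) (N : K) :
    ∑ i ∈ s, (z i ^ 2 - (N - 3) / 2 * z i * (2 * z i - x - y)) * ψOn z (s.erase i) x y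
      = (4 - N) * #s * ψOn z s x y
        + (N - 3) / 2 * (x * ∑ i ∈ s, ψOn z (s.erase i) x y * (y - z i)
          + y * ∑ i ∈ s, ψOn z (s.erase i) x y * (x - z i))
        - 1 / (x - y) * (x ^ 2 * ∑ i ∈ s, ψOn z (s.erase i) x y * (y - z i)
          - y ^ 2 * ∑ i ∈ s, ψOn z (s.erase i) x y * (x - z i)) := by
  have hterm : ∀ i ∈ s, (z i ^ 2 - (N - 3) / 2 * z i * (2 * z i - x - y)) * ψOn z (s.erase i) x y
      = (4 - N) * ψOn z s x y
        + (N - 3) / 2 * (x * (ψOn z (s.erase i) x y * (y - z i))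
          + y * (ψOn z (s.erase i) x y * (x - z i)))
        - 1 / (x - y) * (x ^ 2 * (ψOn z (s.erase i) x y * (y - z i))
          - y ^ 2 * (ψOn z (s.erase i) x y * (x - z i))) := fun i hi => by
    rw [oneBody_eq hxy, ← mul_ψOn_erase z hi]
    ring
  rw [sum_congr rfl hterm]
  simp only [sum_add_distrib, sum_sub_distrib, ← mul_sum, sum_const, nsmul_eq_mul]
  ring

end Field

theorem ψOn_calogero_identity {𝕜 : Type*} [NontriviallyNormedField 𝕜] [CharZero 𝕜]
    [DecidableEq ι] (z : ι → 𝕜) (s : Finset ι) (hz : Set.InjOn z s) (N : 𝕜) {x y : 𝕜}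
    (hxy : x ≠ y) :
    ∑ i ∈ s,
      ((1 / 2) * z i ^ 2 * iteratedDeriv 2 (fun t => ψOn (Function.update z i t) s x y) (z i)
        + (∑ j ∈ s.erase i, 2 * z i ^ 2 / (z i - z j)) *
            deriv (fun t => ψOn (Function.update z i t) s x y) (z i)
        - (N - 3) / 2 * z i * deriv (fun t => ψOn (Function.update z i t) s x y) (z i))
    = #s * (2 * #s - N + 2) * ψOn z s x y
      + (-(x ^ 2) * iteratedDeriv 2 (fun t => ψOn z s t y) x
          - y ^ 2 * iteratedDeriv 2 (fun t => ψOn z s x t) y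
          + (N - 3) / 2 * (x * deriv (fun t => ψOn z s t y) x + y * deriv (fun t => ψOn z s x t) y))
      - 1 / (x - y) * (x ^ 2 * deriv (fun t => ψOn z s t y) x
          - y ^ 2 * deriv (fun t => ψOn z s x t) y) := by
  have hupdate : ∀ i ∈ s, (fun t => ψOn (Function.update z i t) s x y)
      = fun t => (x - t) * (y - t) * ψOn z (s.erase i) x y :=
    fun i hi => funext fun t => ψOn_update_of_mem z hi t x y
  rw [sum_congr rfl fun i hi => by
    rw [hupdate i hi, deriv_sub_mul_sub_mul, iteratedDeriv_two_sub_mul_sub_mul]]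
  rw [deriv_ψOn_left, iteratedDeriv_two_ψOn_left, deriv_ψOn_right, iteratedDeriv_two_ψOn_right]
  calc _ = ∑ i ∈ s, (z i ^ 2 - (N - 3) / 2 * z i * (2 * z i - x - y)) * ψOn z (s.erase i) x y
        + ∑ i ∈ s, ∑ j ∈ s.erase i,
          2 * z i ^ 2 / (z i - z j) * ((2 * z i - x - y) * ψOn z (s.erase i) x y) := by
        rw [← sum_add_distrib]
        exact sum_congr rfl fun i _ => by rw [sum_mul]; ring
    _ = _ := by
        rw [sum_oneBody z s hxy, sum_sum_erase_twoBody z s hz]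
        ring

theorem stmt19_general (M : ℕ) (N : ℂ) (z : Fin M → ℂ) (hz : Function.Injective z)
    (x y : ℂ) (hxy : x ≠ y) :
    ∑ i : Fin M,
      ((1 / 2) * z i ^ 2 * iteratedDeriv 2 (fun t => ψ (Function.update z i t) x y) (z i)
        + (∑ j ∈ univ.erase i, 2 * z i ^ 2 / (z i - z j)) *
            deriv (fun t => ψ (Function.update z i t) x y) (z i)
        - (N - 3) / 2 * z i * deriv (fun t => ψ (Function.update z i t) x y) (z i))
    = (M : ℂ) * (2 * (M : ℂ) - N + 2) * ψ z x y
      + (-(x ^ 2) * iteratedDeriv 2 (fun t => ψ z t y) x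
          - y ^ 2 * iteratedDeriv 2 (fun t => ψ z x t) y
          + (N - 3) / 2 * (x * deriv (fun t => ψ z t y) x + y * deriv (fun t => ψ z x t) y))
      - 1 / (x - y) * (x ^ 2 * deriv (fun t => ψ z t y) x - y ^ 2 * deriv (fun t => ψ z x t) y) := by
  have := ψOn_calogero_identity z univ hz.injOn N hxy
  rwa [card_univ, Fintype.card_fin] at this

theorem stmt19 (M : ℕ) (hM : 1 ≤ M) (N : ℂ) (z : Fin M → ℂ) (hz : Function.Injective z)
    (x y : ℂ) (hxy : x ≠ y) :
    ∑ i : Fin M,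
      ((1 / 2) * z i ^ 2 * iteratedDeriv 2 (fun t => ψ (Function.update z i t) x y) (z i)
        + (∑ j ∈ univ.erase i, 2 * z i ^ 2 / (z i - z j)) *
            deriv (fun t => ψ (Function.update z i t) x y) (z i)
        - (N - 3) / 2 * z i * deriv (fun t => ψ (Function.update z i t) x y) (z i))
    = (M : ℂ) * (2 * (M : ℂ) - N + 2) * ψ z x y
      + (-(x ^ 2) * iteratedDeriv 2 (fun t => ψ z t y) x
          - y ^ 2 * iteratedDeriv 2 (fun t => ψ z x t) y
          + (N - 3) / 2 * (x * deriv (fun t => ψ z t y) x + y * deriv (fun t => ψ z x t) y))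
      - 1 / (x - y) * (x ^ 2 * deriv (fun t => ψ z t y) x - y ^ 2 * deriv (fun t => ψ z x t) y) :=
  stmt19_general M N z hz x y hxy
end
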